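/- Let Σ₀, Σ₁ be symmetric positive definite d×d matrices, and let Σ₀^{1/2}Σ₁^{1/2} = UΛVᵀ be a singular value decomposition. Then max over Q ∈ O(d) of Tr(Σ₁^{1/2} Q Σ₀^{1/2}) is attained at Q* = VUᵀ and equals Tr(Λ) = Tr((Σ₀^{1/2} Σ₁ Σ₀^{1/2})^{1/2}). -/

import Mathlib

open Matrix

namespace Matrix.PosSemidef

open scoped ComplexOrder

/-- The positive semidefinite square root of a positive semidefinite matrix
(the Mathlib definition of December 2024, since removed from Mathlib). -/
noncomputable def sqrt {𝕜 : Type*} [RCLike 𝕜] {n : Type*} [Fintype n] [DecidableEq n]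
    {A : Matrix n n 𝕜} (hA : A.PosSemidef) : Matrix n n 𝕜 :=
  hA.1.eigenvectorUnitary.1 * diagonal ((↑) ∘ (√·) ∘ hA.1.eigenvalues) *
  (star hA.1.eigenvectorUnitary : Matrix n n 𝕜)

lemma sqrt_eq_cfc {n : Type*} [Fintype n] [DecidableEq n] {A : Matrix n n ℝ}
    (hA : A.PosSemidef) : hA.sqrt = cfc Real.sqrt A := by
  rw [hA.1.cfc_eq]
  simp [Matrix.IsHermitian.cfc, Matrix.PosSemidef.sqrt]

lemma spectrum_nonneg' {n : Type*} [Fintype n] [DecidableEq n] {A : Matrix n n ℝ}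
    (hA : A.PosSemidef) : ∀ x ∈ spectrum ℝ A, 0 ≤ x := by
  intro x hx
  obtain ⟨i, rfl⟩ := hA.1.spectrum_real_eq_range_eigenvalues ▸ hx
  exact hA.eigenvalues_nonneg i

lemma posSemidef_sqrt {n : Type*} [Fintype n] [DecidableEq n] {A : Matrix n n ℝ}
    (hA : A.PosSemidef) : hA.sqrt.PosSemidef := by
  unfold Matrix.PosSemidef.sqrt
  apply PosSemidef.mul_mul_conjTranspose_same
  refine posSemidef_diagonal_iff.mpr fun i ↦ ?_
  simp [Real.sqrt_nonneg]

lemma sqrt_mul_self {n : Type*} [Fintype n] [DecidableEq n] {A : Matrix n n ℝ}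
    (hA : A.PosSemidef) : hA.sqrt * hA.sqrt = A := by
  have hsa : IsSelfAdjoint A := hA.1
  rw [sqrt_eq_cfc, ← cfc_mul Real.sqrt Real.sqrt A]
  conv_rhs => rw [← cfc_id' ℝ A]
  exact cfc_congr fun x hx => Real.mul_self_sqrt (hA.spectrum_nonneg' x hx)

lemma eq_sqrt_of_sq_eq {n : Type*} [Fintype n] [DecidableEq n] {A B : Matrix n n ℝ}
    (hA : A.PosSemidef) (hB : B.PosSemidef) (hAB : A ^ 2 = B) : A = hB.sqrt := by
  have hsa : IsSelfAdjoint A := hA.1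
  rw [sqrt_eq_cfc, ← hAB, ← cfc_comp_pow Real.sqrt 2 A]
  conv_lhs => rw [← cfc_id' ℝ A]
  exact cfc_congr fun x hx => (Real.sqrt_sq (hA.spectrum_nonneg' x hx)).symm

end Matrix.PosSemidef

lemma diag_le_one_of_orth {d : ℕ} (M : Matrix (Fin d) (Fin d) ℝ)
    (hM : M * Mᵀ = 1) (i : Fin d) : M i i ≤ 1 := by
  have h1 : (M * Mᵀ) i i = 1 := by rw [hM]; simp
  have h2 : ∑ j, M i j * M i j = 1 := by
    simpa [Matrix.mul_apply, Matrix.transpose_apply] using h1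
  have h3 : M i i * M i i ≤ ∑ j, M i j * M i j :=
    Finset.single_le_sum (fun j _ => mul_self_nonneg (M i j)) (Finset.mem_univ i)
  nlinarith [h3, h2]


lemma sandwich {d : ℕ} (X A Y Z B W : Matrix (Fin d) (Fin d) ℝ) (h : Y * Z = 1) :
    (X * A * Y) * (Z * B * W) = X * (A * B) * W := by
  simp only [Matrix.mul_assoc]
  rw [← Matrix.mul_assoc Y Z, h, Matrix.one_mul]

/-- Orthogonal maximization of `Tr(Σ₁^{1/2} Q Σ₀^{1/2})`: the maximum over `Q ∈ O(d)` is
attained at `Q* = VUᵀ` (from the SVD `Σ₀^{1/2}Σ₁^{1/2} = UΛVᵀ`) and equals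
`Tr(Λ) = Tr((Σ₀^{1/2} Σ₁ Σ₀^{1/2})^{1/2})`. -/
theorem stmt_7 (d : ℕ) (Sig₀ Sig₁ : Matrix (Fin d) (Fin d) ℝ)
    (hSig₀ : Sig₀.PosDef) (hSig₁ : Sig₁.PosDef)
    (S₀ S₁ : Matrix (Fin d) (Fin d) ℝ)
    (hS₀ : S₀ = hSig₀.posSemidef.sqrt) (hS₁ : S₁ = hSig₁.posSemidef.sqrt)
    (U V : Matrix (Fin d) (Fin d) ℝ) (σ : Fin d → ℝ)
    (hU : U * Uᵀ = 1) (hV : V * Vᵀ = 1) (hσ : ∀ i, 0 ≤ σ i)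
    (hSVD : S₀ * S₁ = U * Matrix.diagonal σ * Vᵀ)
    (hP : (S₀ * Sig₁ * S₀).PosSemidef) :
    IsGreatest {t : ℝ | ∃ Q : Matrix (Fin d) (Fin d) ℝ, Q * Qᵀ = 1 ∧
        t = Matrix.trace (S₁ * Q * S₀)} (Matrix.trace (Matrix.diagonal σ)) ∧
      Matrix.trace (S₁ * (V * Uᵀ) * S₀) = Matrix.trace (Matrix.diagonal σ) ∧
      Matrix.trace (Matrix.diagonal σ) = Matrix.trace hP.sqrt := by
  have hUt : Uᵀ * U = 1 := mul_eq_one_comm.mp hU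
  have hVt : Vᵀ * V = 1 := mul_eq_one_comm.mp hV
  have hS₀sym : S₀ᵀ = S₀ := by
    have := hSig₀.posSemidef.posSemidef_sqrt.isHermitian
    rw [hS₀]
    simpa [Matrix.conjTranspose_eq_transpose_of_trivial, Matrix.IsSymm] using this
  have hS₁sym : S₁ᵀ = S₁ := by
    have := hSig₁.posSemidef.posSemidef_sqrt.isHermitian
    rw [hS₁]
    simpa [Matrix.conjTranspose_eq_transpose_of_trivial, Matrix.IsSymm] using this
  have hS₁sq : S₁ * S₁ = Sig₁ := by rw [hS₁]; exact hSig₁.posSemidef.sqrt_mul_self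
  -- key trace computation
  have key : ∀ Q : Matrix (Fin d) (Fin d) ℝ,
      Matrix.trace (S₁ * Q * S₀) = ∑ i, σ i * (Vᵀ * Q * U) i i := by
    intro Q
    have : Matrix.trace (S₁ * Q * S₀)
        = Matrix.trace (Matrix.diagonal σ * (Vᵀ * Q * U)) := by
      rw [Matrix.trace_mul_cycle, ← Matrix.mul_assoc, hSVD]
      rw [show U * Matrix.diagonal σ * Vᵀ * Q = U * (Matrix.diagonal σ * (Vᵀ * Q)) by
        simp [Matrix.mul_assoc]]
      rw [Matrix.trace_mul_comm, Matrix.mul_assoc, Matrix.mul_assoc]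
    rw [this]
    simp [Matrix.trace, Matrix.diag, Matrix.diagonal_mul]
  have hdiagtr : Matrix.trace (Matrix.diagonal σ) = ∑ i, σ i := Matrix.trace_diagonal σ
  -- the value is attained at Q* = V * Uᵀ
  have hQstar_orth : (V * Uᵀ) * (V * Uᵀ)ᵀ = 1 := by
    rw [Matrix.transpose_mul, Matrix.transpose_transpose]
    calc V * Uᵀ * (U * Vᵀ) = V * (Uᵀ * U) * Vᵀ := by simp [Matrix.mul_assoc]
      _ = 1 := by rw [hUt, Matrix.mul_one, hV]
  have hQstar_val : Matrix.trace (S₁ * (V * Uᵀ) * S₀) = Matrix.trace (Matrix.diagonal σ) := by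
    rw [key, hdiagtr]
    have : Vᵀ * (V * Uᵀ) * U = 1 := by
      calc Vᵀ * (V * Uᵀ) * U = (Vᵀ * V) * (Uᵀ * U) := by simp [Matrix.mul_assoc]
        _ = 1 := by rw [hUt, hVt, Matrix.mul_one]
    rw [this]
    simp [Matrix.one_apply]
  refine ⟨⟨⟨V * Uᵀ, hQstar_orth, hQstar_val.symm⟩, ?_⟩, hQstar_val, ?_⟩
  · -- upper bound
    rintro t ⟨Q, hQ, rfl⟩
    rw [key, hdiagtr]
    have hM : (Vᵀ * Q * U) * (Vᵀ * Q * U)ᵀ = 1 := by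
      have h2 : (Vᵀ * Q * U)ᵀ = Uᵀ * (Qᵀ * V) := by
        simp [Matrix.transpose_mul, Matrix.mul_assoc]
      rw [h2]
      calc Vᵀ * Q * U * (Uᵀ * (Qᵀ * V)) = Vᵀ * (Q * (U * Uᵀ) * Qᵀ) * V := by
            simp [Matrix.mul_assoc]
        _ = 1 := by rw [hU, Matrix.mul_one, hQ, Matrix.mul_one, hVt]
    refine Finset.sum_le_sum fun i _ => ?_
    calc σ i * (Vᵀ * Q * U) i i ≤ σ i * 1 :=
          mul_le_mul_of_nonneg_left (diag_le_one_of_orth _ hM i) (hσ i)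
      _ = σ i := mul_one _
  · -- trace(Λ) = trace(sqrt(S₀ Σ₁ S₀))
    have hB : (U * Matrix.diagonal σ * Uᵀ).PosSemidef := by
      have hd : (Matrix.diagonal σ).PosSemidef :=
        Matrix.posSemidef_diagonal_iff.mpr hσ
      have := hd.mul_mul_conjTranspose_same U
      simpa [Matrix.conjTranspose_eq_transpose_of_trivial] using this
    have hsq : (U * Matrix.diagonal σ * Uᵀ) ^ 2 = S₀ * Sig₁ * S₀ := by
      have h1 : S₀ * Sig₁ * S₀ = (S₀ * S₁) * (S₀ * S₁)ᵀ := by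
        rw [Matrix.transpose_mul, hS₀sym, hS₁sym, ← hS₁sq]
        simp [Matrix.mul_assoc]
      rw [h1, hSVD, pow_two, Matrix.transpose_mul, Matrix.transpose_mul,
        Matrix.transpose_transpose, Matrix.diagonal_transpose,
        ← Matrix.mul_assoc V (Matrix.diagonal σ) Uᵀ,
        sandwich U (Matrix.diagonal σ) Uᵀ U (Matrix.diagonal σ) Uᵀ hUt,
        sandwich U (Matrix.diagonal σ) Vᵀ V (Matrix.diagonal σ) Uᵀ hVt]
    have hfinal : U * Matrix.diagonal σ * Uᵀ = hP.sqrt := hB.eq_sqrt_of_sq_eq hP hsq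
    rw [← hfinal, Matrix.trace_mul_cycle, hUt, Matrix.one_mul]
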